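/- Let X be the solution of the recursive distributional equation X =_d √U·X + √U·(1−√U), and let f be the version of its Lebesgue density satisfying the integral equation f(t) = 2·∫_{2√t−1}^{t} g(x,t)·f(x) dx + ∫_{t}^{1} (g(x,t) − 1)·f(x) dx for all t ∈ [0,1] and f = 0 outside [0,1], where g(x,t) := (1+x)/√((1+x)² − 4t). Then for every ε with 0 < ε < 1, f is Hölder continuous on [0, 1−ε] with exponent 1/2: for all 0 ≤ s < t ≤ 1−ε, |f(t) − f(s)| ≤ (9 + 6·ε^{−3/2})·‖f‖_∞·√(t−s), where ‖f‖_∞ := sup_{t ∈ ℝ} f(t). -/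

import Mathlib

open MeasureTheory

noncomputable section

/-- The uniform distribution on `[0,1]`. -/
def unif : Measure ℝ := volume.restrict (Set.Icc 0 1)

/-- The map `(x, u) ↦ √u·x + √u·(1 − √u)`. -/
def rdeMap (q : ℝ × ℝ) : ℝ :=
  Real.sqrt q.2 * q.1 + Real.sqrt q.2 * (1 - Real.sqrt q.2)

/-- `μ` is a (probability) solution of the recursive distributional equation
`X =_d √U·X + √U·(1 − √U)` with `X, U` independent and `U` uniform on `[0,1]`. -/
def IsRDESolution (μ : Measure ℝ) : Prop :=
  IsProbabilityMeasure μ ∧ Measure.map rdeMap (μ.prod unif) = μ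

/-- The function `g(x,t) = (1+x)/√((1+x)² − 4t)`. -/
def gdens (x t : ℝ) : ℝ := (1 + x) / Real.sqrt ((1 + x) ^ 2 - 4 * t)

/-- `f` is the version of the Lebesgue density of `μ` which vanishes outside `[0,1]` and
satisfies the integral equation
`f(t) = 2·∫_{2√t−1}^{t} g(x,t)·f(x) dx + ∫_{t}^{1} (g(x,t) − 1)·f(x) dx` on `[0,1]`. -/
def IsRDEDensity (μ : Measure ℝ) (f : ℝ → ℝ) : Prop :=
  Measurable f ∧ (∀ t, 0 ≤ f t) ∧
  μ = volume.withDensity (fun t => ENNReal.ofReal (f t)) ∧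
  (∀ t : ℝ, t < 0 ∨ 1 < t → f t = 0) ∧
  ∀ t ∈ Set.Icc (0 : ℝ) 1,
    f t = 2 * (∫ x in (2 * Real.sqrt t - 1)..t, gdens x t * f x)
          + ∫ x in t..(1 : ℝ), (gdens x t - 1) * f x

/-!
Write `g = gdens`. Because `g(x,t) = 0` for `-1 ≤ x ≤ 2√t - 1`, the integral equation reads
`f t = ∫ x in -1..1, rdeKernel t x * f x`, with kernel `2 g(x,t)` for `x ≤ t` and `g(x,t) - 1`
for `x > t`; hence `|f t - f s| ≤ ‖f‖_∞ ∫ |rdeKernel t x - rdeKernel s x| dx`. Beyond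
`2√t - 1`, `g(·,t)` is the derivative of `gdensPrimitive t x = √((1+x)² - 4t)`, and `g(x,·)` is
increasing wherever it is positive. On each of `[-1, s]`, `[s, t]`, `[t, 1]` the kernel
difference is therefore bounded by a combination of `g(·,s)`, `g(·,t)` and `1` with explicit
integral; the total is at most `12 √(t - s) ≤ (9 + 6 ε^{-3/2}) √(t - s)`.

`sSup` of a set of reals that is not bounded above is `0`, so `f` must also be shown bounded.
From `g(x,t) ≤ H(t,x) = 2 / √(x - (2√t - 1))` (`gdensMajorant`) the equation gives `f ≤ 2 H f`;
iterating once and using the Beta-type bound `∫ H(t,x) H(x,y) dx ≤ 16` yields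
`f ≤ 64 ∫ f = 64`.
-/

open Set Real intervalIntegral
open scoped ENNReal

/-! ## The kernel `gdens` and its primitive in `x` -/

section Gdens

variable {s t x : ℝ}

def gdensPrimitive (t x : ℝ) : ℝ := √((1 + x) ^ 2 - 4 * t)

lemma two_mul_sqrt_sub_one_le (ht : 0 ≤ t) : 2 * √t - 1 ≤ t := by
  nlinarith [sq_sqrt ht, sq_nonneg (√t - 1)]

lemma neg_one_le_two_mul_sqrt_sub_one (t : ℝ) : -1 ≤ 2 * √t - 1 := by
  linarith [sqrt_nonneg t]

lemma one_add_sq_sub_four_mul_nonpos (ht : 0 ≤ t) (hx : -1 ≤ x) (hxt : x ≤ 2 * √t - 1) :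
    (1 + x) ^ 2 - 4 * t ≤ 0 := by
  nlinarith [sq_sqrt ht, sqrt_nonneg t]

lemma one_add_sq_sub_four_mul_pos (ht : 0 ≤ t) (hxt : 2 * √t - 1 < x) :
    0 < (1 + x) ^ 2 - 4 * t := by
  nlinarith [sq_sqrt ht, sqrt_nonneg t]

lemma gdens_nonneg (t : ℝ) (hx : -1 ≤ x) : 0 ≤ gdens x t :=
  div_nonneg (by linarith) (sqrt_nonneg _)

lemma gdens_eq_zero (ht : 0 ≤ t) (hx : -1 ≤ x) (hxt : x ≤ 2 * √t - 1) : gdens x t = 0 := by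
  rw [gdens, sqrt_eq_zero'.mpr (one_add_sq_sub_four_mul_nonpos ht hx hxt), div_zero]

lemma gdens_le_gdens (hst : s ≤ t) (hx : -1 ≤ x) (hD : 0 < (1 + x) ^ 2 - 4 * t) :
    gdens x s ≤ gdens x t :=
  div_le_div_of_nonneg_left (by linarith) (sqrt_pos.mpr hD) (sqrt_le_sqrt (by linarith))

lemma one_le_gdens (ht : 0 ≤ t) (hx : -1 ≤ x) (hD : 0 < (1 + x) ^ 2 - 4 * t) :
    1 ≤ gdens x t := by
  rw [gdens, le_div_iff₀ (sqrt_pos.mpr hD), one_mul]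
  calc √((1 + x) ^ 2 - 4 * t) ≤ √((1 + x) ^ 2) := sqrt_le_sqrt (by linarith)
    _ = 1 + x := sqrt_sq (by linarith)

lemma continuous_gdensPrimitive (t : ℝ) : Continuous (gdensPrimitive t) := by
  unfold gdensPrimitive; fun_prop

lemma hasDerivAt_gdensPrimitive (hD : 0 < (1 + x) ^ 2 - 4 * t) :
    HasDerivAt (gdensPrimitive t) (gdens x t) x := by
  have hq : HasDerivAt (fun y => (1 + y) ^ 2 - 4 * t) (2 * (1 + x)) x := by
    simpa using (((hasDerivAt_id' x).const_add (1 : ℝ)).pow 2).sub_const (4 * t)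
  exact (hq.sqrt hD.ne').congr_deriv (by unfold gdens; field_simp)

lemma gdensPrimitive_eq_zero (ht : 0 ≤ t) (hx : -1 ≤ x) (hxt : x ≤ 2 * √t - 1) :
    gdensPrimitive t x = 0 :=
  sqrt_eq_zero'.mpr (one_add_sq_sub_four_mul_nonpos ht hx hxt)

lemma gdensPrimitive_self (ht : t ≤ 1) : gdensPrimitive t t = 1 - t := by
  rw [gdensPrimitive, show (1 + t) ^ 2 - 4 * t = (1 - t) ^ 2 by ring, sqrt_sq (by linarith)]

lemma gdensPrimitive_two_mul_sqrt_sub_one (ht : 0 ≤ t) :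
    gdensPrimitive s (2 * √t - 1) = 2 * √(t - s) := by
  rw [gdensPrimitive, show (1 + (2 * √t - 1)) ^ 2 - 4 * s = 2 ^ 2 * (t - s) by
    linear_combination 4 * sq_sqrt ht, sqrt_mul (by norm_num), sqrt_sq (by norm_num)]

lemma gdensPrimitive_mono (t : ℝ) {x y : ℝ} (hx : -1 ≤ x) (hxy : x ≤ y) :
    gdensPrimitive t x ≤ gdensPrimitive t y :=
  sqrt_le_sqrt (by nlinarith)

lemma gdensPrimitive_anti (x : ℝ) (hst : s ≤ t) : gdensPrimitive t x ≤ gdensPrimitive s x :=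
  sqrt_le_sqrt (by linarith)

lemma gdensPrimitive_le_one_sub_add (hst : s ≤ t) (ht : t ≤ 1) :
    gdensPrimitive s t ≤ 1 - t + 2 * √(t - s) := by
  have hts : 0 ≤ t - s := sub_nonneg.mpr hst
  rw [gdensPrimitive, sqrt_le_iff]
  refine ⟨by positivity, ?_⟩
  nlinarith [sq_sqrt hts, sqrt_nonneg (t - s)]

lemma intervalIntegrable_gdens_and_integral_of_le {c d : ℝ} (ht : 0 ≤ t)
    (hc : 2 * √t - 1 ≤ c) (hcd : c ≤ d) :
    IntervalIntegrable (gdens · t) volume c d ∧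
      ∫ x in c..d, gdens x t = gdensPrimitive t d - gdensPrimitive t c := by
  have hderiv : ∀ x ∈ Ioo c d, HasDerivAt (gdensPrimitive t) (gdens x t) x := fun x hx =>
    hasDerivAt_gdensPrimitive (one_add_sq_sub_four_mul_pos ht (hc.trans_lt hx.1))
  have hint : IntervalIntegrable (gdens · t) volume c d :=
    (intervalIntegrable_iff_integrableOn_Ioc_of_le hcd).2 <|
      integrableOn_deriv_of_nonneg (continuous_gdensPrimitive t).continuousOn hderiv
        fun x hx => gdens_nonneg t (by linarith [neg_one_le_two_mul_sqrt_sub_one t, hx.1])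
  exact ⟨hint, integral_eq_sub_of_hasDerivAt_of_le hcd
    (continuous_gdensPrimitive t).continuousOn hderiv hint⟩

lemma intervalIntegrable_gdens_and_integral_neg_one (ht : 0 ≤ t) (hx : -1 ≤ x) :
    IntervalIntegrable (gdens · t) volume (-1) x ∧
      ∫ y in (-1)..x, gdens y t = gdensPrimitive t x := by
  set a := 2 * √t - 1
  have ha := neg_one_le_two_mul_sqrt_sub_one t
  have hzero : ∀ y, -1 ≤ y → y ≤ a →
      IntervalIntegrable (gdens · t) volume (-1) y ∧ ∫ z in (-1)..y, gdens z t = 0 := by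
    intro y hy hya
    have hEq : EqOn (gdens · t) 0 (uIcc (-1) y) := fun z hz => by
      rw [uIcc_of_le hy] at hz
      exact gdens_eq_zero ht hz.1 (hz.2.trans hya)
    exact ⟨(intervalIntegrable_const (c := 0)).congr (hEq.symm.mono uIoc_subset_uIcc), by
      rw [integral_congr hEq]; simp⟩
  rcases le_or_gt x a with hxa | hax
  · rw [gdensPrimitive_eq_zero ht hx hxa]
    exact hzero x hx hxa
  · obtain ⟨hI₁, hE₁⟩ := hzero a ha le_rfl
    obtain ⟨hI₂, hE₂⟩ := intervalIntegrable_gdens_and_integral_of_le ht le_rfl hax.le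
    refine ⟨hI₁.trans hI₂, ?_⟩
    rw [← integral_add_adjacent_intervals hI₁ hI₂, hE₁, hE₂,
      gdensPrimitive_eq_zero ht ha le_rfl]
    ring

lemma intervalIntegrable_gdens {c d : ℝ} (ht : 0 ≤ t) (hc : -1 ≤ c) (hd : -1 ≤ d) :
    IntervalIntegrable (gdens · t) volume c d :=
  (intervalIntegrable_gdens_and_integral_neg_one ht hc).1.symm.trans
    (intervalIntegrable_gdens_and_integral_neg_one ht hd).1

lemma integral_gdens {c d : ℝ} (ht : 0 ≤ t) (hc : -1 ≤ c) (hd : -1 ≤ d) :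
    ∫ x in c..d, gdens x t = gdensPrimitive t d - gdensPrimitive t c := by
  obtain ⟨hIc, hEc⟩ := intervalIntegrable_gdens_and_integral_neg_one ht hc
  obtain ⟨hId, hEd⟩ := intervalIntegrable_gdens_and_integral_neg_one ht hd
  rw [← integral_interval_sub_left hId hIc, hEc, hEd]

end Gdens

/-! ## The integral equation with a single kernel, and its `L¹`-continuity -/

def RDEIntegralEq (f : ℝ → ℝ) : Prop :=
  ∀ t ∈ Icc (0 : ℝ) 1,
    f t = 2 * (∫ x in (2 * √t - 1)..t, gdens x t * f x) +
      ∫ x in t..(1 : ℝ), (gdens x t - 1) * f x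

def rdeKernel (t x : ℝ) : ℝ := if x ≤ t then 2 * gdens x t else gdens x t - 1

section Kernel

variable {s t x : ℝ}

lemma IntervalIntegrable.mul_of_abs_le {g f : ℝ → ℝ} {a b M : ℝ}
    (hg : IntervalIntegrable g volume a b) (hf : AEStronglyMeasurable f volume)
    (hM : ∀ x, |f x| ≤ M) : IntervalIntegrable (fun x => g x * f x) volume a b :=
  ⟨hg.1.mul_bdd hf.restrict (ae_of_all _ hM), hg.2.mul_bdd hf.restrict (ae_of_all _ hM)⟩

lemma intervalIntegrable_rdeKernel (ht0 : 0 ≤ t) (ht1 : t ≤ 1) :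
    IntervalIntegrable (rdeKernel t) volume (-1) 1 := by
  have hleft : IntervalIntegrable (rdeKernel t) volume (-1) t :=
    ((intervalIntegrable_gdens ht0 le_rfl (by linarith)).const_mul 2).congr fun x hx => by
      rw [uIoc_of_le (by linarith)] at hx
      simp [rdeKernel, hx.2]
  have hright : IntervalIntegrable (rdeKernel t) volume t 1 :=
    ((intervalIntegrable_gdens (c := t) (d := 1) ht0 (by linarith) (by norm_num)).sub
      (intervalIntegrable_const (c := 1))).congr fun x hx => by
        rw [uIoc_of_le ht1] at hx
        simp [rdeKernel, not_le.mpr hx.1]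
  exact hleft.trans hright

lemma integral_rdeKernel_mul {f : ℝ → ℝ} {M : ℝ} (hf : AEStronglyMeasurable f volume)
    (hM : ∀ x, |f x| ≤ M) (ht0 : 0 ≤ t) (ht1 : t ≤ 1) :
    ∫ x in (-1)..1, rdeKernel t x * f x =
      2 * (∫ x in (2 * √t - 1)..t, gdens x t * f x) + ∫ x in t..1, (gdens x t - 1) * f x := by
  set a := 2 * √t - 1
  have ha := neg_one_le_two_mul_sqrt_sub_one t
  have hat := two_mul_sqrt_sub_one_le ht0
  have hgf : ∀ c d, -1 ≤ c → -1 ≤ d →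
      IntervalIntegrable (fun x => gdens x t * f x) volume c d :=
    fun c d hc hd => (intervalIntegrable_gdens ht0 hc hd).mul_of_abs_le hf hM
  have hK := (intervalIntegrable_rdeKernel ht0 ht1).mul_of_abs_le hf hM
  have htI : t ∈ uIcc (-1 : ℝ) 1 := mem_uIcc_of_le (by linarith) ht1
  rw [← integral_add_adjacent_intervals (hK.mono_set (uIcc_subset_uIcc left_mem_uIcc htI))
    (hK.mono_set (uIcc_subset_uIcc htI right_mem_uIcc))]
  congr 1
  · have hzero : ∫ x in (-1)..a, gdens x t * f x = 0 := by
      refine (integral_congr fun x hx => ?_).trans integral_zero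
      rw [uIcc_of_le ha] at hx
      simp [gdens_eq_zero ht0 hx.1 hx.2]
    rw [← zero_add (∫ x in a..t, gdens x t * f x), ← hzero,
      integral_add_adjacent_intervals (hgf _ _ le_rfl ha) (hgf _ _ ha (by linarith)),
      ← intervalIntegral.integral_const_mul]
    refine integral_congr_ae (ae_of_all _ fun x hx => ?_)
    rw [uIoc_of_le (by linarith)] at hx
    simp [rdeKernel, hx.2, mul_assoc]
  · refine integral_congr_ae (ae_of_all _ fun x hx => ?_)
    rw [uIoc_of_le ht1] at hx
    simp [rdeKernel, not_le.mpr hx.1]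

lemma abs_rdeKernel_sub_le_of_le_two_mul_sqrt_sub_one (hs : 0 ≤ s) (hst : s ≤ t)
    (hx : -1 ≤ x) (hxt : x ≤ 2 * √t - 1) (hxs : x ≤ s) :
    |rdeKernel t x - rdeKernel s x| ≤ 2 * gdens x s := by
  simp only [rdeKernel, hxs, hxs.trans hst, if_true, gdens_eq_zero (hs.trans hst) hx hxt]
  rw [abs_le]
  constructor <;> linarith [gdens_nonneg s hx]

lemma abs_rdeKernel_sub_le_of_two_mul_sqrt_sub_one_lt (hs : 0 ≤ s) (hst : s ≤ t)
    (hxt : 2 * √t - 1 < x) (hxs : x ≤ s) :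
    |rdeKernel t x - rdeKernel s x| ≤ 2 * (gdens x t - gdens x s) := by
  have hx : -1 ≤ x := (neg_one_le_two_mul_sqrt_sub_one t).trans hxt.le
  have hmono := gdens_le_gdens hst hx (one_add_sq_sub_four_mul_pos (hs.trans hst) hxt)
  simp only [rdeKernel, hxs, hxs.trans hst, if_true]
  rw [abs_le]
  constructor <;> linarith

lemma abs_rdeKernel_sub_le_of_mem_Ioc (hs : 0 ≤ s) (hx : x ∈ Ioc s t) :
    |rdeKernel t x - rdeKernel s x| ≤ 2 * gdens x t + (gdens x s - 1) := by
  have hx1 : -1 ≤ x := by linarith [hx.1]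
  have hD := one_add_sq_sub_four_mul_pos hs ((two_mul_sqrt_sub_one_le hs).trans_lt hx.1)
  have h1 := one_le_gdens hs hx1 hD
  have h0 := gdens_nonneg t hx1
  simp only [rdeKernel, hx.2, not_le.mpr hx.1, if_true, if_false]
  rw [abs_le]
  constructor <;> linarith

lemma abs_rdeKernel_sub_le_of_lt (hs : 0 ≤ s) (hst : s ≤ t) (htx : t < x) :
    |rdeKernel t x - rdeKernel s x| ≤ gdens x t - gdens x s := by
  have ht := hs.trans hst
  have hmono := gdens_le_gdens hst (by linarith)
    (one_add_sq_sub_four_mul_pos ht ((two_mul_sqrt_sub_one_le ht).trans_lt htx))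
  simp only [rdeKernel, not_le.mpr htx, not_le.mpr (hst.trans_lt htx), if_false]
  rw [abs_le]
  constructor <;> linarith

lemma intervalIntegrable_abs_rdeKernel_sub (hs : 0 ≤ s) (hst : s ≤ t) (ht : t ≤ 1)
    ⦃c d : ℝ⦄ (hc : c ∈ Icc (-1 : ℝ) 1) (hd : d ∈ Icc (-1 : ℝ) 1) :
    IntervalIntegrable (fun x => |rdeKernel t x - rdeKernel s x|) volume c d := by
  rw [← uIcc_of_le (by norm_num : (-1 : ℝ) ≤ 1)] at hc hd
  exact ((intervalIntegrable_rdeKernel (hs.trans hst) ht).sub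
    (intervalIntegrable_rdeKernel hs (hst.trans ht))).abs.mono_set (uIcc_subset_uIcc hc hd)

lemma integral_abs_rdeKernel_sub_le_left (hs : 0 ≤ s) (hst : s ≤ t) (ht : t ≤ 1) :
    ∫ x in (-1)..s, |rdeKernel t x - rdeKernel s x| ≤
      8 * √(t - s) + 2 * (gdensPrimitive t s - (1 - s)) := by
  have ht0 := hs.trans hst
  set a := 2 * √t - 1
  -- Below `p` the kernel `gdens · t` vanishes; above `p` it dominates `gdens · s`.
  set p := min a s
  have hp : -1 ≤ p := le_min (neg_one_le_two_mul_sqrt_sub_one t) (by linarith)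
  have hpa : p ≤ a := min_le_left a s
  have hps : p ≤ s := min_le_right a s
  have hK := intervalIntegrable_abs_rdeKernel_sub hs hst ht
  have hp1 : p ∈ Icc (-1 : ℝ) 1 := ⟨hp, by linarith⟩
  have hs1 : s ∈ Icc (-1 : ℝ) 1 := ⟨by linarith, by linarith⟩
  have I₁ : ∫ x in (-1)..p, |rdeKernel t x - rdeKernel s x| ≤ 2 * gdensPrimitive s p := by
    calc _ ≤ ∫ x in (-1)..p, 2 * gdens x s :=
          integral_mono_on_of_le_Ioo hp (hK ⟨le_rfl, by norm_num⟩ hp1)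
            ((intervalIntegrable_gdens hs le_rfl hp).const_mul 2) fun x hx =>
            abs_rdeKernel_sub_le_of_le_two_mul_sqrt_sub_one hs hst hx.1.le
              (hx.2.le.trans hpa) (hx.2.le.trans hps)
      _ = 2 * gdensPrimitive s p := by
          rw [intervalIntegral.integral_const_mul, integral_gdens hs le_rfl hp,
            gdensPrimitive_eq_zero hs le_rfl (neg_one_le_two_mul_sqrt_sub_one s), sub_zero]
  have I₂ : ∫ x in p..s, |rdeKernel t x - rdeKernel s x| ≤
      2 * (gdensPrimitive t s - (1 - s) + gdensPrimitive s p) := by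
    have hgt := intervalIntegrable_gdens ht0 hp (by linarith : -1 ≤ s)
    have hgs := intervalIntegrable_gdens hs hp (by linarith : -1 ≤ s)
    calc _ ≤ ∫ x in p..s, 2 * (gdens x t - gdens x s) :=
          integral_mono_on_of_le_Ioo hps (hK hp1 hs1) ((hgt.sub hgs).const_mul 2) fun x hx =>
            abs_rdeKernel_sub_le_of_two_mul_sqrt_sub_one_lt hs hst
              ((min_lt_iff.mp hx.1).resolve_right (not_lt.mpr hx.2.le)) hx.2.le
      _ = _ := by
          rw [intervalIntegral.integral_const_mul, integral_sub hgt hgs,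
            integral_gdens ht0 hp (by linarith), integral_gdens hs hp (by linarith),
            gdensPrimitive_eq_zero ht0 hp hpa, gdensPrimitive_self (hst.trans ht)]
          ring
  have hGp : gdensPrimitive s p ≤ 2 * √(t - s) :=
    (gdensPrimitive_mono s hp hpa).trans_eq (gdensPrimitive_two_mul_sqrt_sub_one ht0)
  rw [← integral_add_adjacent_intervals (hK ⟨le_rfl, by norm_num⟩ hp1) (hK hp1 hs1)]
  linarith

lemma integral_abs_rdeKernel_sub_le_middle (hs : 0 ≤ s) (hst : s ≤ t) (ht : t ≤ 1) :
    ∫ x in s..t, |rdeKernel t x - rdeKernel s x| ≤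
      2 * (1 - t - gdensPrimitive t s) + (gdensPrimitive s t - (1 - s) - (t - s)) := by
  have ht0 := hs.trans hst
  have hs1 : -1 ≤ s := by linarith
  have ht1 : -1 ≤ t := by linarith
  have hgt := intervalIntegrable_gdens ht0 hs1 ht1
  have hgs := intervalIntegrable_gdens hs hs1 ht1
  calc _ ≤ ∫ x in s..t, 2 * gdens x t + (gdens x s - 1) :=
        integral_mono_on_of_le_Ioo hst
          (intervalIntegrable_abs_rdeKernel_sub hs hst ht ⟨hs1, hst.trans ht⟩ ⟨ht1, ht⟩)
          ((hgt.const_mul 2).add (hgs.sub intervalIntegrable_const)) fun x hx =>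
          abs_rdeKernel_sub_le_of_mem_Ioc hs (Ioo_subset_Ioc_self hx)
    _ = _ := by
        rw [integral_add (hgt.const_mul 2) (hgs.sub intervalIntegrable_const),
          integral_sub hgs intervalIntegrable_const, intervalIntegral.integral_const_mul,
          integral_gdens ht0 hs1 ht1, integral_gdens hs hs1 ht1,
          intervalIntegral.integral_const, smul_eq_mul, mul_one, gdensPrimitive_self ht,
          gdensPrimitive_self (hst.trans ht)]

lemma integral_abs_rdeKernel_sub_le_right (hs : 0 ≤ s) (hst : s ≤ t) (ht : t ≤ 1) :
    ∫ x in t..1, |rdeKernel t x - rdeKernel s x| ≤ gdensPrimitive s t - (1 - t) := by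
  have ht0 := hs.trans hst
  have ht1 : -1 ≤ t := by linarith
  have h1 : (-1 : ℝ) ≤ 1 := by norm_num
  have hgt := intervalIntegrable_gdens ht0 ht1 h1
  have hgs := intervalIntegrable_gdens hs ht1 h1
  have hG1 := gdensPrimitive_anti 1 hst
  calc _ ≤ ∫ x in t..1, gdens x t - gdens x s :=
        integral_mono_on_of_le_Ioo ht
          (intervalIntegrable_abs_rdeKernel_sub hs hst ht ⟨ht1, ht⟩ ⟨h1, le_rfl⟩)
          (hgt.sub hgs) fun x hx => abs_rdeKernel_sub_le_of_lt hs hst hx.1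
    _ = gdensPrimitive t 1 - (1 - t) - (gdensPrimitive s 1 - gdensPrimitive s t) := by
        rw [integral_sub hgt hgs, integral_gdens ht0 ht1 h1, integral_gdens hs ht1 h1,
          gdensPrimitive_self ht]
    _ ≤ _ := by linarith

lemma integral_abs_rdeKernel_sub_le (hs : 0 ≤ s) (hst : s ≤ t) (ht : t ≤ 1) :
    ∫ x in (-1)..1, |rdeKernel t x - rdeKernel s x| ≤ 12 * √(t - s) := by
  have hK := intervalIntegrable_abs_rdeKernel_sub hs hst ht
  have hs1 : s ∈ Icc (-1 : ℝ) 1 := ⟨by linarith, hst.trans ht⟩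
  have ht1 : t ∈ Icc (-1 : ℝ) 1 := ⟨by linarith, ht⟩
  have h1 : (1 : ℝ) ∈ Icc (-1 : ℝ) 1 := ⟨by norm_num, le_rfl⟩
  rw [← integral_add_adjacent_intervals (hK ⟨le_rfl, by norm_num⟩ hs1) (hK hs1 h1),
    ← integral_add_adjacent_intervals (hK hs1 ht1) (hK ht1 h1)]
  have := integral_abs_rdeKernel_sub_le_left hs hst ht
  have := integral_abs_rdeKernel_sub_le_middle hs hst ht
  have := integral_abs_rdeKernel_sub_le_right hs hst ht
  have := gdensPrimitive_le_one_sub_add hst ht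
  linarith

end Kernel

/-! ## Boundedness of solutions -/

lemma le_mul_mul_lintegral_of_le_mul_lintegral_kernel {α : Type*} [MeasurableSpace α]
    {μ : Measure α} [SFinite μ] {k : α → α → ℝ≥0∞}
    (hk : Measurable (Function.uncurry k)) {φ : α → ℝ≥0∞} (hφ : Measurable φ) {C B : ℝ≥0∞}
    (hφk : ∀ x, φ x ≤ C * ∫⁻ y, k x y * φ y ∂μ) {t : α}
    (hkk : ∀ᵐ y ∂μ, ∫⁻ x, k t x * k x y ∂μ ≤ B) :
    φ t ≤ C * C * B * ∫⁻ y, φ y ∂μ := by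
  have hkφ : Measurable (Function.uncurry fun x y => k x y * φ y) :=
    hk.mul (hφ.comp measurable_snd)
  have hkkφ : Measurable (Function.uncurry fun x y => k t x * (k x y * φ y)) :=
    (hk.of_uncurry_left.comp measurable_fst).mul hkφ
  calc φ t ≤ C * ∫⁻ x, k t x * φ x ∂μ := hφk t
    _ ≤ C * ∫⁻ x, k t x * (C * ∫⁻ y, k x y * φ y ∂μ) ∂μ := by
        gcongr with x; exact hφk x
    _ = C * C * ∫⁻ x, ∫⁻ y, k t x * (k x y * φ y) ∂μ ∂μ := by
        have h : ∀ x, k t x * (C * ∫⁻ y, k x y * φ y ∂μ) =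
            C * ∫⁻ y, k t x * (k x y * φ y) ∂μ :=
          fun x => by rw [lintegral_const_mul _ hkφ.of_uncurry_left]; ring
        have hm : Measurable fun x => ∫⁻ y, k t x * (k x y * φ y) ∂μ :=
          hkkφ.lintegral_prod_right'
        simp_rw [h]
        rw [lintegral_const_mul _ hm, mul_assoc]
    _ = C * C * ∫⁻ y, (∫⁻ x, k t x * k x y ∂μ) * φ y ∂μ := by
        rw [lintegral_lintegral_swap hkkφ.aemeasurable]
        congr 1
        refine lintegral_congr fun y => ?_
        have hm : Measurable fun x => k t x * k x y := hk.of_uncurry_left.mul hk.of_uncurry_right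
        rw [← lintegral_mul_const _ hm]
        simp_rw [mul_assoc]
    _ ≤ C * C * ∫⁻ y, B * φ y ∂μ := by
        gcongr C * C * ?_
        exact lintegral_mono_ae (hkk.mono fun y hy => by gcongr)
    _ = C * C * B * ∫⁻ y, φ y ∂μ := by rw [lintegral_const_mul B hφ]; ring

lemma setLIntegral_ofReal_deriv_le {f f' : ℝ → ℝ} {s : Set ℝ} (hs : MeasurableSet s)
    (hf' : ∀ x ∈ s, HasDerivWithinAt f (f' x) s x) (hf : MonotoneOn f s) {a b : ℝ}
    (hab : MapsTo f s (Icc a b)) :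
    ∫⁻ x in s, ENNReal.ofReal (f' x) ≤ ENNReal.ofReal (b - a) := by
  rw [lintegral_deriv_eq_volume_image_of_monotoneOn hs hf' hf, ← Real.volume_Icc]
  exact measure_mono hab.image_subset

lemma setLIntegral_inv_sqrt_sub_left_le (c w : ℝ) :
    ∫⁻ x in Ioo c w, ENNReal.ofReal (√(x - c))⁻¹ ≤ ENNReal.ofReal (2 * √(w - c)) := by
  refine (setLIntegral_ofReal_deriv_le (f := fun x => 2 * √(x - c)) measurableSet_Ioo
    (fun x hx => ?_) (fun x _ y _ hxy => ?_) (fun x hx => ?_)).trans_eq (by rw [sub_zero])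
  · have hpos : 0 < x - c := sub_pos.mpr hx.1
    refine ((((hasDerivAt_id' x).sub_const c).sqrt hpos.ne').const_mul 2).hasDerivWithinAt
      |>.congr_deriv ?_
    field_simp
  · exact mul_le_mul_of_nonneg_left (sqrt_le_sqrt (by linarith)) zero_le_two
  · exact ⟨by positivity,
      mul_le_mul_of_nonneg_left (sqrt_le_sqrt (by linarith [hx.2])) zero_le_two⟩

lemma setLIntegral_inv_sqrt_sub_right_le (c w : ℝ) :
    ∫⁻ x in Ioo c w, ENNReal.ofReal (√(w - x))⁻¹ ≤ ENNReal.ofReal (2 * √(w - c)) := by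
  refine (setLIntegral_ofReal_deriv_le (f := fun x => -(2 * √(w - x))) measurableSet_Ioo
    (fun x hx => ?_) (fun x _ y _ hxy => neg_le_neg ?_) (fun x hx => ?_)).trans_eq
    (by rw [zero_sub, neg_neg])
  · have hpos : 0 < w - x := sub_pos.mpr hx.2
    refine ((((hasDerivAt_id' x).const_sub w).sqrt hpos.ne').const_mul 2).neg.hasDerivWithinAt
      |>.congr_deriv ?_
    field_simp
  · gcongr
  · exact ⟨by simp only [neg_le_neg_iff]; gcongr; exact hx.1.le,
      by simp only [Left.neg_nonpos_iff]; positivity⟩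

lemma inv_sqrt_mul_inv_sqrt_le {u v : ℝ} (hu : 0 < u) (hv : 0 < v) :
    (√u)⁻¹ * (√v)⁻¹ ≤ (√(u + v))⁻¹ * ((√u)⁻¹ + (√v)⁻¹) := by
  have hu' := sqrt_pos.mpr hu
  have hv' := sqrt_pos.mpr hv
  have huv : 0 < √(u + v) := sqrt_pos.mpr (by linarith)
  have hsum : √(u + v) ≤ √u + √v := by
    rw [sqrt_le_iff]
    exact ⟨by positivity, by nlinarith [sq_sqrt hu.le, sq_sqrt hv.le]⟩
  calc (√u)⁻¹ * (√v)⁻¹ = (√u * √v)⁻¹ * 1 := by rw [mul_inv, mul_one]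
    _ ≤ (√u * √v)⁻¹ * ((√u + √v) / √(u + v)) := by
        gcongr; rwa [le_div_iff₀ huv, one_mul]
    _ = _ := by field_simp; ring

lemma ofReal_inv_sqrt_mul_inv_sqrt_le_indicator (c w x : ℝ) :
    ENNReal.ofReal (√(x - c))⁻¹ * ENNReal.ofReal (√(w - x))⁻¹ ≤ (Ioo c w).indicator
      (fun x => ENNReal.ofReal (√(w - c))⁻¹ *
        (ENNReal.ofReal (√(x - c))⁻¹ + ENNReal.ofReal (√(w - x))⁻¹)) x := by
  by_cases hx : x ∈ Ioo c w
  · have hu := sub_pos.mpr hx.1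
    have hv := sub_pos.mpr hx.2
    rw [indicator_of_mem hx, ← ENNReal.ofReal_mul (by positivity),
      ← ENNReal.ofReal_add (by positivity) (by positivity),
      ← ENNReal.ofReal_mul (by positivity)]
    refine ENNReal.ofReal_le_ofReal ((inv_sqrt_mul_inv_sqrt_le hu hv).trans_eq ?_)
    rw [show x - c + (w - x) = w - c by ring]
  · rw [indicator_of_notMem hx, nonpos_iff_eq_zero]
    rcases not_and_or.mp hx with hx | hx <;> rw [not_lt] at hx
    · simp [sqrt_eq_zero'.mpr (sub_nonpos.mpr hx)]
    · simp [sqrt_eq_zero'.mpr (sub_nonpos.mpr hx)]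

lemma lintegral_inv_sqrt_mul_inv_sqrt_le (c w : ℝ) :
    ∫⁻ x, ENNReal.ofReal (√(x - c))⁻¹ * ENNReal.ofReal (√(w - x))⁻¹ ≤ 4 := by
  set L := w - c
  calc _ ≤ ∫⁻ x in Ioo c w, ENNReal.ofReal (√L)⁻¹ *
        (ENNReal.ofReal (√(x - c))⁻¹ + ENNReal.ofReal (√(w - x))⁻¹) := by
        rw [← lintegral_indicator measurableSet_Ioo]
        exact lintegral_mono (ofReal_inv_sqrt_mul_inv_sqrt_le_indicator c w)
    _ = ENNReal.ofReal (√L)⁻¹ * ((∫⁻ x in Ioo c w, ENNReal.ofReal (√(x - c))⁻¹) +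
        ∫⁻ x in Ioo c w, ENNReal.ofReal (√(w - x))⁻¹) := by
        rw [lintegral_const_mul' _ _ ENNReal.ofReal_ne_top, lintegral_add_left (by fun_prop)]
    _ ≤ ENNReal.ofReal (√L)⁻¹ * (ENNReal.ofReal (2 * √L) + ENNReal.ofReal (2 * √L)) := by
        gcongr
        exacts [setLIntegral_inv_sqrt_sub_left_le c w, setLIntegral_inv_sqrt_sub_right_le c w]
    _ = ENNReal.ofReal ((√L)⁻¹ * (2 * √L + 2 * √L)) := by
        rw [ENNReal.ofReal_mul (inv_nonneg.mpr (sqrt_nonneg L)),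
          ENNReal.ofReal_add (by positivity) (by positivity)]
    _ ≤ 4 := by
        rcases (sqrt_nonneg L).eq_or_lt with hL | hL
        · simp [← hL]
        · rw [show (√L)⁻¹ * (2 * √L + 2 * √L) = 4 by field_simp; ring]; simp

def gdensMajorant (t x : ℝ) : ℝ := 2 * (√(x - (2 * √t - 1)))⁻¹

section Majorant

variable {t x y : ℝ}

lemma gdens_le_gdensMajorant (ht : 0 ≤ t) (hx : x ∈ Icc (0 : ℝ) 1) :
    gdens x t ≤ gdensMajorant t x := by
  rcases le_or_gt ((1 + x) ^ 2 - 4 * t) 0 with hD | hD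
  · rw [gdens, sqrt_eq_zero'.mpr hD, div_zero, gdensMajorant]
    positivity
  · have hst := sq_sqrt ht
    have hlt : 2 * √t < 1 + x :=
      lt_of_pow_lt_pow_left₀ 2 (by linarith [hx.1]) (by nlinarith)
    have hu : 0 < x - (2 * √t - 1) := by linarith
    have huD : x - (2 * √t - 1) ≤ (1 + x) ^ 2 - 4 * t := by nlinarith [sqrt_nonneg t, hx.1]
    rw [gdens, gdensMajorant, div_eq_mul_inv]
    gcongr
    linarith [hx.2]

lemma gdensMajorant_le (hx : x ∈ Icc (0 : ℝ) 1) (hy : y ∈ Icc (0 : ℝ) 1) :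
    gdensMajorant x y ≤ 2 * (√(((1 + y) / 2) ^ 2 - x))⁻¹ := by
  set w := ((1 + y) / 2) ^ 2
  have hsw : √w = (1 + y) / 2 := sqrt_sq (by linarith [hy.1])
  have hsx1 : √x ≤ 1 := sqrt_le_one.mpr hx.2
  have hkey : y - (2 * √x - 1) = 2 * (√w - √x) := by rw [hsw]; ring
  rw [gdensMajorant, hkey]
  rcases le_or_gt (w - x) 0 with hwx | hwx
  · have : √w ≤ √x := sqrt_le_sqrt (by linarith)
    rw [sqrt_eq_zero'.mpr (by linarith), sqrt_eq_zero'.mpr hwx]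
  · have hlt : √x < √w := sqrt_lt_sqrt hx.1 (by linarith)
    have hprod : w - x = (√w - √x) * (√w + √x) := by
      linear_combination -sq_sqrt (sq_nonneg ((1 + y) / 2)) + sq_sqrt hx.1
    gcongr
    rw [hprod]; nlinarith [hy.2]

lemma lintegral_gdensMajorant_mul_le (t : ℝ) (hy : y ∈ Icc (0 : ℝ) 1) :
    ∫⁻ x in Icc (0 : ℝ) 1,
      ENNReal.ofReal (gdensMajorant t x) * ENNReal.ofReal (gdensMajorant x y) ≤ 16 := by
  set c := 2 * √t - 1
  set w := ((1 + y) / 2) ^ 2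
  calc _ ≤ ∫⁻ x in Icc (0 : ℝ) 1,
        ENNReal.ofReal (2 * (√(x - c))⁻¹) * ENNReal.ofReal (2 * (√(w - x))⁻¹) :=
        setLIntegral_mono' measurableSet_Icc fun x hx => by
          gcongr ENNReal.ofReal _ * ENNReal.ofReal ?_; exact gdensMajorant_le hx hy
    _ ≤ ∫⁻ x, ENNReal.ofReal (2 * (√(x - c))⁻¹) * ENNReal.ofReal (2 * (√(w - x))⁻¹) :=
        setLIntegral_le_lintegral _ _
    _ = 4 * ∫⁻ x, ENNReal.ofReal (√(x - c))⁻¹ * ENNReal.ofReal (√(w - x))⁻¹ := by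
        rw [← lintegral_const_mul' _ _ (by norm_num)]
        refine lintegral_congr fun x => ?_
        rw [ENNReal.ofReal_mul zero_le_two, ENNReal.ofReal_mul zero_le_two]
        norm_num
        ring
    _ ≤ 4 * 4 := by gcongr; exact lintegral_inv_sqrt_mul_inv_sqrt_le c w
    _ = 16 := by norm_num

end Majorant

lemma ofReal_intervalIntegral_le {F : ℝ → ℝ} {a b : ℝ} (hab : a ≤ b) :
    ENNReal.ofReal (∫ x in a..b, F x) ≤ ∫⁻ x in Ioc a b, ENNReal.ofReal |F x| := by
  rw [intervalIntegral.integral_of_le hab]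
  refine (ofReal_le_enorm _).trans ((enorm_integral_le_lintegral_enorm _).trans_eq ?_)
  simp only [Real.enorm_eq_ofReal_abs]

namespace RDEIntegralEq

variable {f : ℝ → ℝ} {s t M : ℝ}

lemma ofReal_le_lintegral_gdensMajorant (hf : RDEIntegralEq f) (hf0 : ∀ x, 0 ≤ f x)
    (hzero : ∀ x ∉ Icc (0 : ℝ) 1, f x = 0) (ht : t ∈ Icc (0 : ℝ) 1) :
    ENNReal.ofReal (f t) ≤
      2 * ∫⁻ x in Icc (0 : ℝ) 1, ENNReal.ofReal (gdensMajorant t x) * ENNReal.ofReal (f x) := by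
  set a := 2 * √t - 1
  set F := (Icc (0 : ℝ) 1).indicator
    fun x => ENNReal.ofReal (gdensMajorant t x) * ENNReal.ofReal (f x)
  have hgf : ∀ x, -1 ≤ x → ENNReal.ofReal |gdens x t * f x| ≤ F x := by
    intro x hx
    by_cases hx01 : x ∈ Icc (0 : ℝ) 1
    · simp only [F, indicator_of_mem hx01]
      rw [abs_of_nonneg (mul_nonneg (gdens_nonneg t hx) (hf0 x)),
        ← ENNReal.ofReal_mul (by unfold gdensMajorant; positivity)]
      exact ENNReal.ofReal_le_ofReal
        (mul_le_mul_of_nonneg_right (gdens_le_gdensMajorant ht.1 hx01) (hf0 x))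
    · simp [hzero x hx01]
  have hI₁ : ENNReal.ofReal (∫ x in a..t, gdens x t * f x) ≤ ∫⁻ x in Ioc a t, F x :=
    (ofReal_intervalIntegral_le (two_mul_sqrt_sub_one_le ht.1)).trans <|
      setLIntegral_mono' measurableSet_Ioc fun x hx =>
        hgf x ((neg_one_le_two_mul_sqrt_sub_one t).trans hx.1.le)
  have hI₂ : ENNReal.ofReal (∫ x in t..1, (gdens x t - 1) * f x) ≤
      ∫⁻ x in Ioc t 1, F x := by
    refine (ofReal_intervalIntegral_le ht.2).trans <| setLIntegral_mono' measurableSet_Ioc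
      fun x hx => le_trans ?_ (hgf x (by linarith [hx.1, ht.1]))
    have h1 := one_le_gdens ht.1 (by linarith [hx.1, ht.1])
      (one_add_sq_sub_four_mul_pos ht.1 ((two_mul_sqrt_sub_one_le ht.1).trans_lt hx.1))
    refine ENNReal.ofReal_le_ofReal ?_
    rw [abs_mul, abs_mul, abs_of_nonneg (by linarith : 0 ≤ gdens x t - 1),
      abs_of_nonneg (by linarith : 0 ≤ gdens x t)]
    exact mul_le_mul_of_nonneg_right (by linarith) (abs_nonneg _)
  calc ENNReal.ofReal (f t) ≤ 2 * ENNReal.ofReal (∫ x in a..t, gdens x t * f x) +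
        ENNReal.ofReal (∫ x in t..1, (gdens x t - 1) * f x) := by
        rw [hf t ht, ← ENNReal.ofReal_ofNat 2, ← ENNReal.ofReal_mul zero_le_two]
        exact ENNReal.ofReal_add_le
    _ ≤ 2 * ((∫⁻ x in Ioc a t, F x) + ∫⁻ x in Ioc t 1, F x) := by
        rw [mul_add]; gcongr; exact hI₂.trans (le_mul_of_one_le_left' one_le_two)
    _ = 2 * ∫⁻ x in Ioc a 1, F x := by
        rw [← lintegral_union measurableSet_Ioc (Ioc_disjoint_Ioc_of_le le_rfl),
          Ioc_union_Ioc_eq_Ioc (two_mul_sqrt_sub_one_le ht.1) ht.2]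
    _ ≤ 2 * ∫⁻ x, F x := by gcongr; exact Measure.restrict_le_self
    _ = _ := by rw [lintegral_indicator measurableSet_Icc]

lemma ofReal_le (hf : RDEIntegralEq f) (hfm : Measurable f) (hf0 : ∀ x, 0 ≤ f x)
    (hzero : ∀ x ∉ Icc (0 : ℝ) 1, f x = 0) (t : ℝ) :
    ENNReal.ofReal (f t) ≤ 64 * ∫⁻ x, ENNReal.ofReal (f x) := by
  by_cases ht : t ∈ Icc (0 : ℝ) 1
  · have hk : Measurable (Function.uncurry fun t x => ENNReal.ofReal (gdensMajorant t x)) := by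
      unfold gdensMajorant; fun_prop
    have hφk : ∀ x, ENNReal.ofReal (f x) ≤ 2 * ∫⁻ y in Icc (0 : ℝ) 1,
        ENNReal.ofReal (gdensMajorant x y) * ENNReal.ofReal (f y) := by
      intro x
      by_cases hx : x ∈ Icc (0 : ℝ) 1
      · exact hf.ofReal_le_lintegral_gdensMajorant hf0 hzero hx
      · simp [hzero x hx]
    calc ENNReal.ofReal (f t) ≤ 2 * 2 * 16 * ∫⁻ x in Icc (0 : ℝ) 1, ENNReal.ofReal (f x) :=
          le_mul_mul_lintegral_of_le_mul_lintegral_kernel hk hfm.ennreal_ofReal hφk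
            ((ae_restrict_iff' measurableSet_Icc).mpr (ae_of_all _ fun y hy =>
              lintegral_gdensMajorant_mul_le t hy))
      _ ≤ 64 * ∫⁻ x, ENNReal.ofReal (f x) := by
          norm_num; gcongr; exact Measure.restrict_le_self
  · simp [hzero t ht]

lemma abs_sub_le (hf : RDEIntegralEq f) (hfm : AEStronglyMeasurable f volume)
    (hM : ∀ x, |f x| ≤ M) (hs : 0 ≤ s) (hst : s ≤ t) (ht : t ≤ 1) :
    |f t - f s| ≤ 12 * M * √(t - s) := by
  have hM0 : 0 ≤ M := (abs_nonneg _).trans (hM 0)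
  have ht0 : 0 ≤ t := hs.trans hst
  have hs1 : s ≤ 1 := hst.trans ht
  have hK : ∀ r, 0 ≤ r → r ≤ 1 →
      IntervalIntegrable (fun x => rdeKernel r x * f x) volume (-1) 1 :=
    fun r hr0 hr1 => (intervalIntegrable_rdeKernel hr0 hr1).mul_of_abs_le hfm hM
  rw [hf t ⟨ht0, ht⟩, hf s ⟨hs, hs1⟩, ← integral_rdeKernel_mul hfm hM ht0 ht,
    ← integral_rdeKernel_mul hfm hM hs hs1, ← integral_sub (hK t ht0 ht) (hK s hs hs1)]
  calc |∫ x in (-1)..1, rdeKernel t x * f x - rdeKernel s x * f x|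
      ≤ ∫ x in (-1)..1, M * |rdeKernel t x - rdeKernel s x| :=
        norm_integral_le_of_norm_le (f := fun x => rdeKernel t x * f x - rdeKernel s x * f x)
          (by norm_num) (ae_of_all _ fun x _ => by
          rw [Real.norm_eq_abs, ← sub_mul, abs_mul, mul_comm]
          exact mul_le_mul_of_nonneg_right (hM x) (abs_nonneg _))
          ((intervalIntegrable_abs_rdeKernel_sub hs hst ht ⟨le_rfl, by norm_num⟩
            ⟨by norm_num, le_rfl⟩).const_mul M)
    _ = M * ∫ x in (-1)..1, |rdeKernel t x - rdeKernel s x| :=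
        intervalIntegral.integral_const_mul _ _
    _ ≤ M * (12 * √(t - s)) := by gcongr; exact integral_abs_rdeKernel_sub_le hs hst ht
    _ = 12 * M * √(t - s) := by ring

end RDEIntegralEq

/-- Hölder continuity with exponent `1/2` of the version `f` of the density of the RDE
solution satisfying the integral equation: for `0 < ε < 1` and `0 ≤ s < t ≤ 1 − ε`,
`|f(t) − f(s)| ≤ (9 + 6·ε^{−3/2})·‖f‖_∞·√(t − s)`, where `‖f‖_∞ = sup_{t ∈ ℝ} f(t)`. -/
theorem rde_density_holder (μ : Measure ℝ) (hμ : IsRDESolution μ)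
    (f : ℝ → ℝ) (hf : IsRDEDensity μ f)
    (ε : ℝ) (hε0 : 0 < ε) (hε1 : ε < 1)
    (s t : ℝ) (hs : 0 ≤ s) (hst : s < t) (ht : t ≤ 1 - ε) :
    |f t - f s| ≤ (9 + 6 * ε ^ (-(3 : ℝ) / 2)) * sSup (Set.range f) * Real.sqrt (t - s) := by
  obtain ⟨hprob, -⟩ := hμ
  obtain ⟨hfm, hf0, hdens, hout, hfeq : RDEIntegralEq f⟩ := hf
  have hzero : ∀ x ∉ Icc (0 : ℝ) 1, f x = 0 := fun x hx =>
    hout x (by simpa only [mem_Icc, not_and_or, not_le] using hx)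
  have hmass : ∫⁻ x, ENNReal.ofReal (f x) = 1 := by
    rw [← setLIntegral_univ, ← withDensity_apply _ MeasurableSet.univ, ← hdens, measure_univ]
  have hbdd : BddAbove (range f) := ⟨64, forall_mem_range.2 fun x => by
    have := hfeq.ofReal_le hfm hf0 hzero x
    rwa [hmass, mul_one, ← ENNReal.ofReal_ofNat, ENNReal.ofReal_le_ofReal_iff (by norm_num)]
      at this⟩
  have hM : ∀ x, |f x| ≤ sSup (range f) := fun x => by
    rw [abs_of_nonneg (hf0 x)]; exact le_csSup hbdd (mem_range_self x)
  have hε : (12 : ℝ) ≤ 9 + 6 * ε ^ (-(3 : ℝ) / 2) := by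
    have := one_le_rpow_of_pos_of_le_one_of_nonpos hε0 hε1.le (by norm_num : -(3 : ℝ) / 2 ≤ 0)
    linarith
  calc |f t - f s| ≤ 12 * sSup (range f) * √(t - s) :=
        hfeq.abs_sub_le hfm.aestronglyMeasurable hM hs hst.le (by linarith)
    _ ≤ _ := by gcongr; exact (abs_nonneg _).trans (hM 0)
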